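/- For any λ ≥ λ_upper := min_ω P_q*( (1/n)Dx + (I − (1/n)DDᵀ)ω ), the solution û of the convex clustering problem minimize (1/2)‖x − u‖² + λ P_q(Du) satisfies Dû = 0, i.e., all estimated cluster centers are equal. Conversely, if λ < λ_upper then Dû ≠ 0. -/

import Mathlib

/-!
Write `x̄ = colMean x` for the columnwise mean of the data. Because `(1/n) DᵀD` is the
orthogonal projection onto the vectors with zero column sums, the points
`(1/n) D x + (I - (1/n) D Dᵀ) ω` are exactly the `c` with `c ⬝ᵥ D u = (x - x̄) ⬝ᵥ u` for all `u`.

If `λ ≥ λ_upper`, Hölder's inequality between `P_q` and `P_q*` gives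
`(x - x̄) ⬝ᵥ (u - x̄) ≤ λ P_q(D u)` for every `u`, so expanding the square shows that `x̄` is the
unique minimiser and `D û = D x̄ = 0`. Conversely, if `D û = 0` then `û = x̄`, and the first-order
condition `(x - x̄) ⬝ᵥ v ≤ λ P_q(D v)` says that the functional `D v ↦ (x - x̄) ⬝ᵥ v` on the range
of `D` is dominated by `λ P_q`. A Hahn–Banach extension of it is such a `c` with `P_q*(c) ≤ λ`,
hence `λ_upper ≤ λ`.
-/

open Matrix

abbrev PairIdx (n : ℕ) := {e : Fin n × Fin n // e.1 < e.2}

/-- The complete-graph difference matrix `D`. -/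
noncomputable def Dmat (n p : ℕ) : Matrix (PairIdx n × Fin p) (Fin n × Fin p) ℝ :=
  fun ej kl =>
    (if kl.1 = ej.1.val.1 then (1 : ℝ) else if kl.1 = ej.1.val.2 then -1 else 0) *
      (if ej.2 = kl.2 then 1 else 0)

/-- The blockwise penalty P_q(b) = Σ_{i<i'} ‖b_{C(i,i')}‖_q, with the base norm on each
p-dimensional block given by `normq`. -/
noncomputable def Pq (n p : ℕ) (normq : (Fin p → ℝ) → ℝ) (b : PairIdx n × Fin p → ℝ) : ℝ :=
  ∑ e : PairIdx n, normq (fun j => b (e, j))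

/-- The blockwise dual norm P_q*(b) = max_{i<i'} ‖b_{C(i,i')}‖_s, with the dual base norm on
each p-dimensional block given by `norms`. -/
noncomputable def Pstar (n p : ℕ) (norms : (Fin p → ℝ) → ℝ) (b : PairIdx n × Fin p → ℝ) : ℝ :=
  ⨆ e : PairIdx n, norms (fun j => b (e, j))

lemma two_nsmul_sum_lt_pairs {α M : Type*} [Fintype α] [LinearOrder α] [AddCommMonoid M]
    (h : α → α → M) (hsymm : ∀ i j, h i j = h j i) (hdiag : ∀ i, h i i = 0) :
    2 • ∑ e : {e : α × α // e.1 < e.2}, h e.val.1 e.val.2 = ∑ i, ∑ j, h i j := by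
  have hsplit : ∀ q : α × α,
      h q.1 q.2 = (if q.1 < q.2 then h q.1 q.2 else 0) + (if q.2 < q.1 then h q.2 q.1 else 0) := by
    rintro ⟨i, j⟩
    rcases lt_trichotomy i j with hij | rfl | hij
    · simp [hij, hij.not_gt]
    · simp [hdiag]
    · simp [hij, hij.not_gt, hsymm i j]
  rw [← Fintype.sum_prod_type', Fintype.sum_congr _ _ hsplit, Finset.sum_add_distrib,
    Fintype.sum_equiv (Equiv.prodComm α α) (fun q => if q.2 < q.1 then h q.2 q.1 else 0)
      (fun q => if q.1 < q.2 then h q.1 q.2 else 0) (fun _ => rfl), two_nsmul, ← Finset.sum_filter,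
    Finset.sum_subtype (p := fun q : α × α => q.1 < q.2) _ (by simp)]

lemma sum_lt_pairs_sub_mul_sub {α : Type*} [Fintype α] [LinearOrder α] (f g : α → ℝ) :
    ∑ e : {e : α × α // e.1 < e.2}, (f e.val.1 - f e.val.2) * (g e.val.1 - g e.val.2)
      = Fintype.card α * ∑ i, f i * g i - (∑ i, f i) * ∑ i, g i := by
  have hpairs := two_nsmul_sum_lt_pairs (fun i j => (f i - f j) * (g i - g j))
    (fun i j => by ring) (fun i => by ring)
  have hall : ∑ i, ∑ j, (f i - f j) * (g i - g j)
      = 2 * (Fintype.card α * ∑ i, f i * g i - (∑ i, f i) * ∑ i, g i) := by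
    simp only [sub_mul, mul_sub, Finset.sum_sub_distrib, ← Finset.mul_sum, ← Finset.sum_mul,
      Finset.sum_const, Finset.card_univ, nsmul_eq_mul]
    simp only [mul_left_comm _ (Fintype.card α : ℝ), ← Finset.mul_sum]
    ring
  rw [hall, two_nsmul, ← two_mul] at hpairs
  exact mul_left_cancel₀ two_ne_zero hpairs

lemma transpose_mulVec_dotProduct {m n : Type*} [Fintype m] [Fintype n]
    (A : Matrix m n ℝ) (b : m → ℝ) (a : n → ℝ) : (Aᵀ *ᵥ b) ⬝ᵥ a = b ⬝ᵥ (A *ᵥ a) := by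
  rw [mulVec_transpose, dotProduct_mulVec]

open Filter Topology in
lemma le_of_forall_pos_le_add_mul {a b c : ℝ} (h : ∀ t > 0, a ≤ b + t * c) : a ≤ b := by
  have hcont : Continuous fun t : ℝ => b + t * c := by fun_prop
  exact ge_of_tendsto (x := 𝓝[>] 0) ((hcont.tendsto' 0 b (by simp)).mono_left nhdsWithin_le_nhds)
    (eventually_nhdsWithin_of_forall h)

lemma le_csInf_mul {S : Set ℝ} {a c : ℝ} (hS : S.Nonempty) (hc : 0 ≤ c)
    (h : ∀ r ∈ S, a ≤ r * c) : a ≤ sInf S * c := by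
  rcases hc.eq_or_lt with rfl | hc
  · obtain ⟨r, hr⟩ := hS
    simpa using h r hr
  · rw [← div_le_iff₀ hc]
    exact le_csInf hS fun r hr => (div_le_iff₀ hc).2 (h r hr)

lemma exists_dotProduct_extension_of_le_sublinear {ι : Type*} [Fintype ι]
    (N : (ι → ℝ) → ℝ) (N_hom : ∀ c : ℝ, 0 < c → ∀ b, N (c • b) = c * N b)
    (N_add : ∀ b b', N (b + b') ≤ N b + N b') (M : Submodule ℝ (ι → ℝ)) (a : ι → ℝ)
    (ha : ∀ m ∈ M, a ⬝ᵥ m ≤ N m) :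
    ∃ c : ι → ℝ, (∀ m ∈ M, c ⬝ᵥ m = a ⬝ᵥ m) ∧ ∀ b, c ⬝ᵥ b ≤ N b := by
  classical
  obtain ⟨g, hgM, hgN⟩ := exists_extension_of_le_sublinear
    ((dotProductBilin ℝ ℝ a).toPMap M) N N_hom N_add fun m => ha m m.2
  have hg : ∀ b, g b = (fun i => g fun j => if i = j then 1 else 0) ⬝ᵥ b := fun b => by
    rw [LinearMap.pi_apply_eq_sum_univ g b, dotProduct_comm]
    rfl
  exact ⟨_, fun m hm => (hg m).symm.trans (hgM ⟨m, hm⟩), fun b => hg b ▸ hgN b⟩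

section QuadraticObjective

variable {ι : Type*} [Fintype ι]

lemma sum_sub_sq_eq (x u w : ι → ℝ) :
    ∑ i, (x i - u i) ^ 2
      = ∑ i, (x i - w i) ^ 2 - 2 * ((x - w) ⬝ᵥ (u - w)) + (u - w) ⬝ᵥ (u - w) := by
  simp only [dotProduct, Pi.sub_apply, Finset.mul_sum, ← Finset.sum_sub_distrib,
    ← Finset.sum_add_distrib]
  exact Finset.sum_congr rfl fun i _ => by ring

lemma eq_of_objective_le_of_dotProduct_le {R : (ι → ℝ) → ℝ} {x ū û : ι → ℝ}
    (hinner : (x - ū) ⬝ᵥ (û - ū) ≤ R û - R ū)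
    (hle : (1 / 2) * ∑ i, (x i - û i) ^ 2 + R û ≤ (1 / 2) * ∑ i, (x i - ū i) ^ 2 + R ū) :
    û = ū := by
  have hsq : (û - ū) ⬝ᵥ (û - ū) ≤ 0 := by
    rw [sum_sub_sq_eq x û ū] at hle
    linarith
  have hnonneg : 0 ≤ (û - ū) ⬝ᵥ (û - ū) := Fintype.sum_nonneg fun i => mul_self_nonneg _
  exact sub_eq_zero.1 (dotProduct_self_eq_zero.1 (le_antisymm hsq hnonneg))

lemma dotProduct_le_of_isMinimizer {R S : (ι → ℝ) → ℝ} {x û : ι → ℝ}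
    (hmin : ∀ u, (1 / 2) * ∑ i, (x i - û i) ^ 2 + R û ≤ (1 / 2) * ∑ i, (x i - u i) ^ 2 + R u)
    (hR : ∀ t > 0, ∀ v, R (û + t • v) ≤ R û + t * S v) (v : ι → ℝ) :
    (x - û) ⬝ᵥ v ≤ S v := by
  refine le_of_forall_pos_le_add_mul (c := (v ⬝ᵥ v) / 2) fun t ht => ?_
  have h := hmin (û + t • v)
  rw [sum_sub_sq_eq x (û + t • v) û, add_sub_cancel_left, dotProduct_smul, smul_dotProduct,
    dotProduct_smul, smul_eq_mul, smul_eq_mul, smul_eq_mul] at h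
  have h' : t * ((x - û) ⬝ᵥ v) ≤ t * (S v + t * ((v ⬝ᵥ v) / 2)) := by
    nlinarith [hR t ht v]
  exact le_of_mul_le_mul_left h' ht

end QuadraticObjective

section DifferenceMatrix

variable {n p : ℕ}

lemma Dmat_mulVec_apply (u : Fin n × Fin p → ℝ) (e : PairIdx n) (j : Fin p) :
    (Dmat n p *ᵥ u) (e, j) = u (e.val.1, j) - u (e.val.2, j) := by
  have hne : e.val.1 ≠ e.val.2 := e.prop.ne
  simp only [Matrix.mulVec, dotProduct, Dmat, Fintype.sum_prod_type, ite_mul, one_mul, zero_mul,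
    mul_ite, mul_one, mul_zero, Finset.sum_ite_eq, Finset.mem_univ, if_true, neg_mul]
  rw [Fintype.sum_eq_add e.val.1 e.val.2 hne (fun k hk => by simp [hk.1, hk.2])]
  simp [hne.symm, sub_eq_add_neg]

lemma Dmat_mulVec_comp_snd (f : Fin p → ℝ) : Dmat n p *ᵥ (f ∘ Prod.snd) = 0 := by
  ext ⟨e, j⟩
  simp [Dmat_mulVec_apply]

lemma Dmat_mulVec_dotProduct (u v : Fin n × Fin p → ℝ) :
    (Dmat n p *ᵥ u) ⬝ᵥ (Dmat n p *ᵥ v)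
      = n * (u ⬝ᵥ v) - ∑ j, (∑ k, u (k, j)) * ∑ k, v (k, j) := by
  simp only [dotProduct, Fintype.sum_prod_type_right, Dmat_mulVec_apply]
  rw [Finset.sum_congr rfl fun j _ =>
    sum_lt_pairs_sub_mul_sub (fun k => u (k, j)) (fun k => v (k, j))]
  simp only [Fintype.card_fin, Finset.sum_sub_distrib, Finset.mul_sum]

noncomputable def colMean (u : Fin n × Fin p → ℝ) : Fin n × Fin p → ℝ :=
  fun kj => (n : ℝ)⁻¹ * ∑ k, u (k, kj.2)

lemma Dmat_mulVec_colMean (u : Fin n × Fin p → ℝ) : Dmat n p *ᵥ colMean u = 0 :=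
  Dmat_mulVec_comp_snd fun j => (n : ℝ)⁻¹ * ∑ k, u (k, j)

lemma transpose_mulVec_Dmat_mulVec (u : Fin n × Fin p → ℝ) :
    (Dmat n p)ᵀ *ᵥ (Dmat n p *ᵥ u) = (n : ℝ) • (u - colMean u) := by
  rcases n.eq_zero_or_pos with rfl | hn
  · ext ⟨k, _⟩
    exact k.elim0
  refine dotProduct_eq _ _ fun v => ?_
  rw [transpose_mulVec_dotProduct, Dmat_mulVec_dotProduct, smul_dotProduct,
    sub_dotProduct, smul_eq_mul, mul_sub, sub_right_inj]
  simp only [colMean, dotProduct, Fintype.sum_prod_type_right, mul_assoc, ← Finset.mul_sum]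
  field_simp

lemma inv_smul_Dmat_mulVec_dotProduct (hn : n ≠ 0) (x u : Fin n × Fin p → ℝ) :
    ((n : ℝ)⁻¹ • Dmat n p *ᵥ x) ⬝ᵥ (Dmat n p *ᵥ u) = (x - colMean x) ⬝ᵥ u := by
  rw [smul_dotProduct, ← transpose_mulVec_dotProduct, transpose_mulVec_Dmat_mulVec,
    smul_dotProduct, inv_smul_smul₀ (Nat.cast_ne_zero.2 hn)]

lemma Dmat_mul_transpose_mulVec_dotProduct (ω : PairIdx n × Fin p → ℝ) (u : Fin n × Fin p → ℝ) :
    ((Dmat n p * (Dmat n p)ᵀ) *ᵥ ω) ⬝ᵥ (Dmat n p *ᵥ u) = n * (ω ⬝ᵥ Dmat n p *ᵥ u) := by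
  rw [← mulVec_mulVec, dotProduct_comm, ← transpose_mulVec_dotProduct,
    transpose_mulVec_Dmat_mulVec, smul_dotProduct, dotProduct_comm, transpose_mulVec_dotProduct,
    mulVec_sub, Dmat_mulVec_colMean, sub_zero, smul_eq_mul]

end DifferenceMatrix

section BlockNorms

lemma map_zero_of_abs_smul {E : Type*} [AddCommGroup E] [Module ℝ E] {N : E → ℝ}
    (hN : ∀ (c : ℝ) (u : E), N (c • u) = |c| * N u) : N 0 = 0 := by
  simpa using hN 0 0

lemma dotProduct_le_mul_of_isGreatest {ι : Type*} [Fintype ι] {normq norms : (ι → ℝ) → ℝ}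
    (hhom : ∀ (c : ℝ) (u : ι → ℝ), normq (c • u) = |c| * normq u)
    (hnonneg : ∀ u : ι → ℝ, 0 ≤ normq u)
    (hdual : ∀ v : ι → ℝ,
      IsGreatest {r : ℝ | ∃ u : ι → ℝ, normq u ≤ 1 ∧ r = ∑ j, u j * v j} (norms v))
    (u v : ι → ℝ) : u ⬝ᵥ v ≤ normq u * norms v := by
  have hball : ∀ w, normq w ≤ 1 → w ⬝ᵥ v ≤ norms v := fun w hw => (hdual v).2 ⟨w, hw, rfl⟩
  rcases (hnonneg u).eq_or_lt with hu | hu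
  · -- every multiple of `u` lies in the unit ball
    rw [← hu, zero_mul]
    by_contra! hpos
    have h := hball (((norms v + 1) / (u ⬝ᵥ v)) • u)
      (by rw [hhom, ← hu, mul_zero]; exact zero_le_one)
    rw [smul_dotProduct, smul_eq_mul, div_mul_cancel₀ _ hpos.ne'] at h
    linarith
  · have h := hball ((normq u)⁻¹ • u)
      (by rw [hhom, abs_of_pos (inv_pos.2 hu), inv_mul_cancel₀ hu.ne'])
    rwa [smul_dotProduct, smul_eq_mul, inv_mul_le_iff₀ hu] at h

variable {n p : ℕ} {normq norms : (Fin p → ℝ) → ℝ}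

lemma Pq_smul (hhom : ∀ (c : ℝ) (u : Fin p → ℝ), normq (c • u) = |c| * normq u)
    (c : ℝ) (b : PairIdx n × Fin p → ℝ) : Pq n p normq (c • b) = |c| * Pq n p normq b := by
  simp only [Pq, Finset.mul_sum, ← hhom]
  rfl

lemma Pq_zero (hhom : ∀ (c : ℝ) (u : Fin p → ℝ), normq (c • u) = |c| * normq u) :
    Pq n p normq 0 = 0 :=
  Finset.sum_eq_zero fun _ _ => map_zero_of_abs_smul hhom

lemma Pq_add_le (htri : ∀ u v : Fin p → ℝ, normq (u + v) ≤ normq u + normq v)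
    (b b' : PairIdx n × Fin p → ℝ) : Pq n p normq (b + b') ≤ Pq n p normq b + Pq n p normq b' := by
  rw [Pq, Pq, Pq, ← Finset.sum_add_distrib]
  exact Finset.sum_le_sum fun e _ => htri _ _

lemma Pq_nonneg (hnonneg : ∀ u : Fin p → ℝ, 0 ≤ normq u) (b : PairIdx n × Fin p → ℝ) :
    0 ≤ Pq n p normq b :=
  Finset.sum_nonneg fun _ _ => hnonneg _

lemma dotProduct_le_Pstar_mul_Pq (hhom : ∀ (c : ℝ) (u : Fin p → ℝ), normq (c • u) = |c| * normq u)
    (hnonneg : ∀ u : Fin p → ℝ, 0 ≤ normq u)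
    (hdual : ∀ v : Fin p → ℝ,
      IsGreatest {r : ℝ | ∃ u : Fin p → ℝ, normq u ≤ 1 ∧ r = ∑ j, u j * v j} (norms v))
    (g b : PairIdx n × Fin p → ℝ) : g ⬝ᵥ b ≤ Pstar n p norms g * Pq n p normq b := by
  have hblock : ∀ e, norms (fun j => g (e, j)) ≤ Pstar n p norms g := fun e =>
    le_ciSup (f := fun e => norms fun j => g (e, j)) (Set.finite_range _).bddAbove e
  calc g ⬝ᵥ b = ∑ e, (fun j => b (e, j)) ⬝ᵥ (fun j => g (e, j)) := by
        simp only [dotProduct, Fintype.sum_prod_type, mul_comm]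
    _ ≤ ∑ e, normq (fun j => b (e, j)) * Pstar n p norms g :=
        Finset.sum_le_sum fun e _ => (dotProduct_le_mul_of_isGreatest hhom hnonneg hdual _ _).trans
          (mul_le_mul_of_nonneg_left (hblock e) (hnonneg _))
    _ = Pstar n p norms g * Pq n p normq b := by rw [Pq, Finset.mul_sum]; simp only [mul_comm]

lemma Pstar_nonneg (hhom : ∀ (c : ℝ) (u : Fin p → ℝ), normq (c • u) = |c| * normq u)
    (hdual : ∀ v : Fin p → ℝ,
      IsGreatest {r : ℝ | ∃ u : Fin p → ℝ, normq u ≤ 1 ∧ r = ∑ j, u j * v j} (norms v))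
    (g : PairIdx n × Fin p → ℝ) : 0 ≤ Pstar n p norms g :=
  Real.iSup_nonneg fun _ =>
    (hdual _).2 ⟨0, (map_zero_of_abs_smul hhom).trans_le zero_le_one, by simp⟩

lemma Pstar_le_of_forall_dotProduct_le
    (hhom : ∀ (c : ℝ) (u : Fin p → ℝ), normq (c • u) = |c| * normq u)
    (hdual : ∀ v : Fin p → ℝ,
      IsGreatest {r : ℝ | ∃ u : Fin p → ℝ, normq u ≤ 1 ∧ r = ∑ j, u j * v j} (norms v))
    {lam : ℝ} (hlam : 0 ≤ lam) {c : PairIdx n × Fin p → ℝ}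
    (hc : ∀ b, c ⬝ᵥ b ≤ lam * Pq n p normq b) : Pstar n p norms c ≤ lam := by
  classical
  refine Real.iSup_le (fun e => ?_) hlam
  obtain ⟨u, hu1, hu⟩ := (hdual fun j => c (e, j)).1
  let b : PairIdx n × Fin p → ℝ := fun q => if q.1 = e then u q.2 else 0
  have hcb : c ⬝ᵥ b = ∑ j, u j * c (e, j) := by
    simp [b, dotProduct, Fintype.sum_prod_type, mul_comm]
  have hPb : Pq n p normq b = normq u := by
    have hoff : ∀ e' ≠ e, normq (fun j => b (e', j)) = 0 := fun e' he' => by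
      simp only [b, he', if_false]
      exact map_zero_of_abs_smul hhom
    rw [Pq, Finset.sum_eq_single e (fun e' _ => hoff e') (by simp)]
    simp [b]
  calc norms (fun j => c (e, j)) = c ⬝ᵥ b := by rw [hu, hcb]
    _ ≤ lam * normq u := hPb ▸ hc b
    _ ≤ lam := mul_le_of_le_one_right hlam hu1

end BlockNorms

noncomputable def dualPoint (n p : ℕ) (x : Fin n × Fin p → ℝ) (ω : PairIdx n × Fin p → ℝ) :
    PairIdx n × Fin p → ℝ :=
  (n : ℝ)⁻¹ • Dmat n p *ᵥ x + (ω - (n : ℝ)⁻¹ • (Dmat n p * (Dmat n p)ᵀ) *ᵥ ω)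

section DualPoints

variable {n p : ℕ}

lemma dualPoint_dotProduct_Dmat_mulVec (hn : n ≠ 0) (x : Fin n × Fin p → ℝ)
    (ω : PairIdx n × Fin p → ℝ) (u : Fin n × Fin p → ℝ) :
    dualPoint n p x ω ⬝ᵥ (Dmat n p *ᵥ u) = (x - colMean x) ⬝ᵥ u := by
  rw [dualPoint, add_dotProduct, sub_dotProduct, smul_dotProduct _ (_ *ᵥ ω),
    Dmat_mul_transpose_mulVec_dotProduct, smul_eq_mul, inv_mul_cancel_left₀ (Nat.cast_ne_zero.2 hn),
    sub_self, add_zero, inv_smul_Dmat_mulVec_dotProduct hn]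

lemma dualPoint_sub_eq {x : Fin n × Fin p → ℝ} {c : PairIdx n × Fin p → ℝ}
    (hc : ∀ v, c ⬝ᵥ (Dmat n p *ᵥ v) = ((n : ℝ)⁻¹ • Dmat n p *ᵥ x) ⬝ᵥ (Dmat n p *ᵥ v)) :
    dualPoint n p x (c - (n : ℝ)⁻¹ • Dmat n p *ᵥ x) = c := by
  have hperp : (Dmat n p)ᵀ *ᵥ (c - (n : ℝ)⁻¹ • Dmat n p *ᵥ x) = 0 :=
    dotProduct_eq _ _ fun v => by
      rw [transpose_mulVec_dotProduct, zero_dotProduct, sub_dotProduct, hc, sub_self]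
  rw [dualPoint, ← mulVec_mulVec, hperp, mulVec_zero, smul_zero, sub_zero, add_sub_cancel]

variable {normq norms : (Fin p → ℝ) → ℝ}

lemma dotProduct_le_sInf_Pstar_dualPoint_mul_Pq (hn : n ≠ 0)
    (hhom : ∀ (c : ℝ) (u : Fin p → ℝ), normq (c • u) = |c| * normq u)
    (hnonneg : ∀ u : Fin p → ℝ, 0 ≤ normq u)
    (hdual : ∀ v : Fin p → ℝ,
      IsGreatest {r : ℝ | ∃ u : Fin p → ℝ, normq u ≤ 1 ∧ r = ∑ j, u j * v j} (norms v))
    (x u : Fin n × Fin p → ℝ) :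
    (x - colMean x) ⬝ᵥ u
      ≤ sInf {r | ∃ ω, r = Pstar n p norms (dualPoint n p x ω)} * Pq n p normq (Dmat n p *ᵥ u) := by
  refine le_csInf_mul ⟨_, 0, rfl⟩ (Pq_nonneg hnonneg _) ?_
  rintro _ ⟨ω, rfl⟩
  rw [← dualPoint_dotProduct_Dmat_mulVec hn]
  exact dotProduct_le_Pstar_mul_Pq hhom hnonneg hdual _ _

lemma exists_Pstar_dualPoint_le (hn : n ≠ 0)
    (hhom : ∀ (c : ℝ) (u : Fin p → ℝ), normq (c • u) = |c| * normq u)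
    (htri : ∀ u v : Fin p → ℝ, normq (u + v) ≤ normq u + normq v)
    (hdual : ∀ v : Fin p → ℝ,
      IsGreatest {r : ℝ | ∃ u : Fin p → ℝ, normq u ≤ 1 ∧ r = ∑ j, u j * v j} (norms v))
    {lam : ℝ} (hlam : 0 ≤ lam) {x : Fin n × Fin p → ℝ}
    (hx : ∀ v, (x - colMean x) ⬝ᵥ v ≤ lam * Pq n p normq (Dmat n p *ᵥ v)) :
    ∃ ω, Pstar n p norms (dualPoint n p x ω) ≤ lam := by
  obtain ⟨c, hcD, hcP⟩ := exists_dotProduct_extension_of_le_sublinear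
    (fun b => lam * Pq n p normq b)
    (fun t ht b => by rw [Pq_smul hhom, abs_of_pos ht, mul_left_comm])
    (fun b b' => by rw [← mul_add]; exact mul_le_mul_of_nonneg_left (Pq_add_le htri b b') hlam)
    (LinearMap.range (Dmat n p).mulVecLin) ((n : ℝ)⁻¹ • Dmat n p *ᵥ x)
    (by rintro _ ⟨v, rfl⟩; exact (inv_smul_Dmat_mulVec_dotProduct hn x v).trans_le (hx v))
  refine ⟨c - (n : ℝ)⁻¹ • Dmat n p *ᵥ x, ?_⟩
  rw [dualPoint_sub_eq fun v => hcD _ ⟨v, rfl⟩]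
  exact Pstar_le_of_forall_dotProduct_le hhom hdual hlam hcP

end DualPoints

theorem stmt11_general (n p : ℕ) (hn : 2 ≤ n)
    (normq norms : (Fin p → ℝ) → ℝ)
    (hhom : ∀ (c : ℝ) (u : Fin p → ℝ), normq (c • u) = |c| * normq u)
    (htri : ∀ u v : Fin p → ℝ, normq (u + v) ≤ normq u + normq v)
    (hnonneg : ∀ u : Fin p → ℝ, 0 ≤ normq u)
    (hdual : ∀ v : Fin p → ℝ,
      IsGreatest {r : ℝ | ∃ u : Fin p → ℝ, normq u ≤ 1 ∧ r = ∑ j, u j * v j} (norms v))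
    (x : Fin n × Fin p → ℝ) (lam : ℝ) (hlam : 0 ≤ lam)
    (uhat : Fin n × Fin p → ℝ)
    (hu : ∀ u : Fin n × Fin p → ℝ,
      (1/2) * ∑ i, (x i - uhat i)^2 + lam * Pq n p normq ((Dmat n p).mulVec uhat)
        ≤ (1/2) * ∑ i, (x i - u i)^2 + lam * Pq n p normq ((Dmat n p).mulVec u))
    (lamUpper : ℝ)
    (hupper : lamUpper = sInf {r : ℝ | ∃ ω : PairIdx n × Fin p → ℝ,
      r = Pstar n p norms ((n : ℝ)⁻¹ • (Dmat n p).mulVec x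
            + (ω - (n : ℝ)⁻¹ • (Dmat n p * (Dmat n p)ᵀ).mulVec ω))}) :
    (lamUpper ≤ lam → (Dmat n p).mulVec uhat = 0) ∧
      (lam < lamUpper → (Dmat n p).mulVec uhat ≠ 0) := by
  change lamUpper = sInf {r | ∃ ω, r = Pstar n p norms (dualPoint n p x ω)} at hupper
  have hn0 : n ≠ 0 := by omega
  have hDmean : Dmat n p *ᵥ colMean x = 0 := Dmat_mulVec_colMean x
  have hPmean : lam * Pq n p normq (Dmat n p *ᵥ colMean x) = 0 := by
    rw [hDmean, Pq_zero hhom, mul_zero]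
  refine ⟨fun hle => ?_, fun hlt hD0 => ?_⟩
  · have hbound := dotProduct_le_sInf_Pstar_dualPoint_mul_Pq hn0 hhom hnonneg hdual x
      (uhat - colMean x)
    rw [← hupper, mulVec_sub, hDmean, sub_zero] at hbound
    have hinner : (x - colMean x) ⬝ᵥ (uhat - colMean x)
        ≤ lam * Pq n p normq (Dmat n p *ᵥ uhat) - lam * Pq n p normq (Dmat n p *ᵥ colMean x) := by
      rw [hPmean, sub_zero]
      exact hbound.trans (mul_le_mul_of_nonneg_right hle (Pq_nonneg hnonneg _))
    rw [eq_of_objective_le_of_dotProduct_le (R := fun u => lam * Pq n p normq (Dmat n p *ᵥ u))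
      hinner (hu _), hDmean]
  · have horth : (x - colMean x) ⬝ᵥ (uhat - colMean x) = 0 := by
      rw [← dualPoint_dotProduct_Dmat_mulVec hn0 x 0, mulVec_sub, hD0, hDmean, sub_zero,
        dotProduct_zero]
    have huhat : uhat = colMean x := eq_of_objective_le_of_dotProduct_le
      (R := fun u => lam * Pq n p normq (Dmat n p *ᵥ u))
      (by rw [horth, hD0, hPmean, Pq_zero hhom, mul_zero, sub_zero]) (hu _)
    have hfoc : ∀ v, (x - uhat) ⬝ᵥ v ≤ lam * Pq n p normq (Dmat n p *ᵥ v) :=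
      dotProduct_le_of_isMinimizer (R := fun u => lam * Pq n p normq (Dmat n p *ᵥ u)) hu
        fun t ht w => by
          rw [mulVec_add, hD0, zero_add, mulVec_smul, Pq_smul hhom, abs_of_pos ht, Pq_zero hhom]
          linarith
    obtain ⟨ω, hω⟩ := exists_Pstar_dualPoint_le hn0 hhom htri hdual hlam (huhat ▸ hfoc)
    have hmin : lamUpper ≤ Pstar n p norms (dualPoint n p x ω) :=
      hupper ▸ csInf_le ⟨0, by rintro _ ⟨ω', rfl⟩; exact Pstar_nonneg hhom hdual _⟩ ⟨ω, rfl⟩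
    linarith

/-- with λ_upper = min_ω P_q*((1/n)Dx + (I − (1/n)DDᵀ)ω), the minimizer û
of (1/2)‖x − u‖² + λ P_q(Du) satisfies Dû = 0 iff λ ≥ λ_upper. -/
theorem stmt11 (n p : ℕ) (hn : 2 ≤ n)
    (normq norms : (Fin p → ℝ) → ℝ)
    (hhom : ∀ (c : ℝ) (u : Fin p → ℝ), normq (c • u) = |c| * normq u)
    (htri : ∀ u v : Fin p → ℝ, normq (u + v) ≤ normq u + normq v)
    (hnonneg : ∀ u : Fin p → ℝ, 0 ≤ normq u)
    (hdual : ∀ v : Fin p → ℝ,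
      IsGreatest {r : ℝ | ∃ u : Fin p → ℝ, normq u ≤ 1 ∧ r = ∑ j, u j * v j} (norms v))
    (hdef : ∀ u : Fin p → ℝ, normq u = 0 → u = 0)
    (x : Fin n × Fin p → ℝ) (lam : ℝ) (hlam : 0 ≤ lam)
    (uhat : Fin n × Fin p → ℝ)
    (hu : ∀ u : Fin n × Fin p → ℝ,
      (1/2) * ∑ i, (x i - uhat i)^2 + lam * Pq n p normq ((Dmat n p).mulVec uhat)
        ≤ (1/2) * ∑ i, (x i - u i)^2 + lam * Pq n p normq ((Dmat n p).mulVec u))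
    (lamUpper : ℝ)
    (hupper : lamUpper = sInf {r : ℝ | ∃ ω : PairIdx n × Fin p → ℝ,
      r = Pstar n p norms ((n : ℝ)⁻¹ • (Dmat n p).mulVec x
            + (ω - (n : ℝ)⁻¹ • (Dmat n p * (Dmat n p)ᵀ).mulVec ω))}) :
    (lamUpper ≤ lam → (Dmat n p).mulVec uhat = 0) ∧
      (lam < lamUpper → (Dmat n p).mulVec uhat ≠ 0) :=
  stmt11_general n p hn normq norms hhom htri hnonneg hdual x lam hlam uhat hu lamUpper hupper
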